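/- arXiv:2406.03612 — 10 statements merged into one kernel-verified Lean document; each statement's English description precedes it below -/
import Mathlib

section
/- For every n ≥ 2, there exists an edge coloring f of the n-dimensional hypercube H_n with 2 colors such that all 2^n vertices have pairwise distinct palettes F(x) = (f(e_1(x)), ..., f(e_n(x))). -/
/-- Flip coordinate `i` of a hypercube vertex: the other endpoint of the
dimension-`i` edge at `x`. -/
def flipCoord {n : ℕ} (x : Fin n → Bool) (i : Fin n) : Fin n → Bool :=
  Function.update x i (!(x i))

/-- `f` assigns a color to each (vertex, dimension) pair; it is an edge coloring
iff both endpoints of every edge get the same value, so `f x i` is the color of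
the dimension-`i` edge `e_i(x)` at `x`. -/
def IsEdgeColoring {n : ℕ} {C : Type*} (f : (Fin n → Bool) → Fin n → C) : Prop :=
  ∀ (x : Fin n → Bool) (i : Fin n), f x i = f (flipCoord x i) i

/-- A proper edge coloring: edges sharing a vertex receive distinct colors. -/
def IsProper {n : ℕ} {C : Type*} (f : (Fin n → Bool) → Fin n → C) : Prop :=
  ∀ x : Fin n → Bool, Function.Injective (f x)

/-- The palette of `x` is the sequence `(f x 1, …, f x n)`, i.e. the function
`f x`; the coloring distinguishes all vertices iff palettes are pairwise
distinct. -/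
def Distinguishes {n : ℕ} {C : Type*} (f : (Fin n → Bool) → Fin n → C) : Prop :=
  ∀ x y : Fin n → Bool, (∀ i, f x i = f y i) → x = y


theorem general_two_colors_suffice (n : ℕ) (hn : 2 ≤ n) :
    ∃ f : (Fin n → Bool) → Fin n → Fin 2,
      IsEdgeColoring f ∧ Distinguishes f := by
  have : NeZero n := ⟨by omega⟩
  have hne : ∀ i : Fin n, i + 1 ≠ i := by
    intro i h
    have hv := congrArg Fin.val h
    rw [Fin.val_add, Fin.val_one'] at hv
    have h1 : 1 % n = 1 := Nat.mod_eq_of_lt (by omega)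
    rw [h1] at hv
    have hi := i.isLt
    rcases Nat.lt_or_ge (i.val + 1) n with hlt | hge
    · rw [Nat.mod_eq_of_lt hlt] at hv; omega
    · have h2 : i.val + 1 = n := by omega
      rw [h2, Nat.mod_self] at hv
      omega
  refine ⟨fun x i => if x (i + 1) then 1 else 0, ?_, ?_⟩
  · intro x i
    simp only [flipCoord, Function.update_of_ne (hne i)]
  · intro x y h
    funext j
    have := h (j - 1)
    simp only [sub_add_cancel] at this
    by_cases hx : x j <;> by_cases hy : y j <;> simp_all
end

section
/- There is no proper edge coloring of the 3-dimensional hypercube H_3 with 3 colors distinguishing all vertices by palettes, since H_3 has 8 vertices but there are only 3! = 6 possible palettes that are permutations of three colors; and there exists a proper edge coloring of H_3 with 4 colors distinguishing all vertices by palettes. -/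
def goodColoring : (Fin 3 → Bool) → Fin 3 → Fin 4 := fun x i =>
  match i with
  | 0 => if x 1 then (if x 2 then 2 else 1) else 0
  | 1 => if x 2 then (if x 0 then 3 else 1) else 2
  | 2 => if x 0 then (if x 1 then 0 else 1) else 3

theorem H3_proper_three_impossible_four_possible :
    (¬ ∃ f : (Fin 3 → Bool) → Fin 3 → Fin 3,
      IsEdgeColoring f ∧ IsProper f ∧ Distinguishes f) ∧
    (∃ f : (Fin 3 → Bool) → Fin 3 → Fin 4,
      IsEdgeColoring f ∧ IsProper f ∧ Distinguishes f) := by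
  constructor
  · rintro ⟨f, -, hprop, hdist⟩
    have hinj : Function.Injective (fun x : Fin 3 → Bool => (⟨f x, hprop x⟩ : Fin 3 ↪ Fin 3)) := by
      intro x y h
      exact hdist x y (fun i => congrFun (congrArg (fun e : Fin 3 ↪ Fin 3 => (e : Fin 3 → Fin 3)) h) i)
    have := Fintype.card_le_of_injective _ hinj
    simp [Fintype.card_embedding_eq] at this
  · refine ⟨goodColoring, ?_, ?_, ?_⟩ <;> · delta IsEdgeColoring IsProper Distinguishes Function.Injective; decide
end

section
/- There is no proper edge coloring of the 4-dimensional hypercube H_4 with 4 colors such that all 16 vertices have pairwise distinct palettes. -/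
set_option maxRecDepth 10000

def digit (e i : Nat) : Nat := e / 4 ^ i % 4

def allPerms : List Nat :=
  [228, 180, 216, 120, 156, 108, 225, 177, 201, 57, 141, 45, 210, 114, 198, 54,
   78, 30, 147, 99, 135, 39, 75, 27]

def check (p : Nat) (L : List Nat) (i : Nat) : Bool :=
  !(L.length.testBit i) || (digit p i == digit (L.getD (2 ^ i - 1) 0) i)

def compat (p : Nat) (L : List Nat) : Bool :=
  !(L.contains p) && check p L 0 && check p L 1 && check p L 2 && check p L 3

def searchAux : Nat → List Nat → Bool
  | 0, _ => true
  | n+1, L => allPerms.any fun p => compat p L && searchAux n (p :: L)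

def vtx (k : Nat) : Fin 4 → Bool := fun i => k.testBit i.val

def enc (a : Fin 4 → Fin 4) : Nat :=
  (a 0).val + 4 * (a 1).val + 16 * (a 2).val + 64 * (a 3).val

lemma digit_enc : ∀ (a : Fin 4 → Fin 4) (i : Fin 4), digit (enc a) i.val = (a i).val := by decide
lemma enc_mem : ∀ a : Fin 4 → Fin 4, Function.Injective a → enc a ∈ allPerms := by decide
lemma vtx_inj : ∀ a b : Fin 16, vtx a.val = vtx b.val → a = b := by decide
lemma flip_vtx : ∀ (a : Fin 16) (i : Fin 4), a.val.testBit i.val = true →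
    flipCoord (vtx a.val) i = vtx (a.val - 2 ^ i.val) := by decide
lemma pow_le_of_testBit : ∀ (a : Fin 16) (i : Fin 4), a.val.testBit i.val = true →
    2 ^ i.val - 1 < a.val := by decide

set_option maxRecDepth 100000 in
lemma key : searchAux 15 [228] = false := by decide

def buildL (F : Nat → Nat) : Nat → List Nat
  | 0 => []
  | j+1 => F j :: buildL F j

lemma buildL_length (F : Nat → Nat) : ∀ j, (buildL F j).length = j := by
  intro j; induction j with
  | zero => rfl
  | succ j ih => simp [buildL, ih]

lemma buildL_getD (F : Nat → Nat) : ∀ j m, m < j → (buildL F j).getD m 0 = F (j - 1 - m) := by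
  intro j; induction j with
  | zero => omega
  | succ j ih =>
    intro m hm
    cases m with
    | zero => simp [buildL]
    | succ m =>
      have : j + 1 - 1 - (m + 1) = j - 1 - m := by omega
      rw [this]
      simpa [buildL] using ih m (by omega)

lemma buildL_mem (F : Nat → Nat) : ∀ j q, q ∈ buildL F j → ∃ k, k < j ∧ q = F k := by
  intro j; induction j with
  | zero => intro q hq; simp [buildL] at hq
  | succ j ih =>
    intro q hq
    rcases List.mem_cons.mp hq with h | h
    · exact ⟨j, by omega, h⟩
    · obtain ⟨k, hk, he⟩ := ih q h
      exact ⟨k, by omega, he⟩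

lemma search_true (f : (Fin 4 → Bool) → Fin 4 → Fin 4)
    (hE : IsEdgeColoring f) (hP : IsProper f) (hD : Distinguishes f) :
    ∀ m j, m + j = 16 → searchAux m (buildL (fun k => enc (f (vtx k))) j) = true := by
  set F : Nat → Nat := fun k => enc (f (vtx k)) with hF
  intro m
  induction m with
  | zero => intro j _; rfl
  | succ m ih =>
    intro j hj
    have hj16 : j < 16 := by omega
    rw [searchAux]
    apply List.any_eq_true.mpr
    refine ⟨F j, enc_mem _ (hP _), ?_⟩
    have hcheck : ∀ i : Fin 4, check (F j) (buildL F j) i.val = true := by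
      intro i
      unfold check
      rw [buildL_length]
      by_cases hbit : j.testBit i.val
      · have hlt : 2 ^ i.val - 1 < j := pow_le_of_testBit ⟨j, hj16⟩ i hbit
        have hpow : 1 ≤ 2 ^ i.val := Nat.one_le_two_pow
        rw [buildL_getD F j _ hlt]
        have harg : j - 1 - (2 ^ i.val - 1) = j - 2 ^ i.val := by omega
        rw [harg]
        have h1 : digit (F j) i.val = (f (vtx j) i).val := digit_enc _ i
        have h2 : digit (F (j - 2 ^ i.val)) i.val = (f (vtx (j - 2 ^ i.val)) i).val :=
          digit_enc _ i
        have h3 : flipCoord (vtx j) i = vtx (j - 2 ^ i.val) := flip_vtx ⟨j, hj16⟩ i hbit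
        have h4 : f (vtx j) i = f (vtx (j - 2 ^ i.val)) i := by
          rw [← h3]; exact hE (vtx j) i
        rw [hbit, h1, h2, h4]
        simp
      · simp [hbit]
    have hcon' : (F j) ∉ buildL F j := by
      intro hmem
      obtain ⟨k, hk, he⟩ := buildL_mem F j _ hmem
      have hpal : ∀ i : Fin 4, f (vtx j) i = f (vtx k) i := by
        intro i
        apply Fin.val_injective
        have d1 : digit (F j) i.val = (f (vtx j) i).val := digit_enc _ i
        have d2 : digit (F k) i.val = (f (vtx k) i).val := digit_enc _ i
        rw [← d1, ← d2, he]
      have hv : vtx j = vtx k := hD _ _ hpal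
      have := vtx_inj ⟨j, hj16⟩ ⟨k, by omega⟩ hv
      simp only [Fin.mk.injEq] at this
      omega
    have hcon : (buildL F j).contains (F j) = false := by
      simpa using hcon'
    have hcompat : compat (F j) (buildL F j) = true := by
      unfold compat
      rw [hcon, hcheck ⟨0, by omega⟩, hcheck ⟨1, by omega⟩, hcheck ⟨2, by omega⟩,
        hcheck ⟨3, by omega⟩]
      rfl
    rw [hcompat]
    have : F j :: buildL F j = buildL F (j + 1) := rfl
    rw [Bool.true_and, this]
    exact ih (j + 1) (by omega)

theorem H4_no_proper_four_coloring_distinguishing :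
    ¬ ∃ f : (Fin 4 → Bool) → Fin 4 → Fin 4,
      IsEdgeColoring f ∧ IsProper f ∧ Distinguishes f := by
  rintro ⟨f, hE, hP, hD⟩
  have hb : Function.Bijective (f (vtx 0)) :=
    Finite.injective_iff_bijective.mp (hP (vtx 0))
  set e : Fin 4 ≃ Fin 4 := Equiv.ofBijective _ hb with he
  set f' : (Fin 4 → Bool) → Fin 4 → Fin 4 := fun x i => e.symm (f x i) with hf'
  have hE' : IsEdgeColoring f' := fun x i => congrArg e.symm (hE x i)
  have hP' : IsProper f' := fun x => e.symm.injective.comp (hP x)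
  have hD' : Distinguishes f' := by
    intro x y h
    exact hD x y fun i => by
      have := congrArg e (h i); simpa [hf'] using this
  have h0 : ∀ i : Fin 4, f' (vtx 0) i = i := by
    intro i
    show e.symm (f (vtx 0) i) = i
    have : f (vtx 0) i = e i := rfl
    rw [this, Equiv.symm_apply_apply]
  have henc : enc (f' (vtx 0)) = 228 := by
    simp only [enc, h0]
    decide
  have h1 : buildL (fun k => enc (f' (vtx k))) 1 = [228] := by
    simp [buildL, henc]
  have := search_true f' hE' hP' hD' 15 1 rfl
  rw [h1] at this
  rw [key] at this
  exact Bool.false_ne_true this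
end

section
/- There exists a proper edge coloring of the 4-dimensional hypercube H_4 with 5 colors such that all 16 vertices have pairwise distinct palettes. -/
def tbl : Fin 16 → Fin 4 → Fin 5 :=
  ![![0,1,2,3], ![0,1,2,4], ![0,1,3,2], ![0,1,3,4],
    ![0,4,2,1], ![0,4,2,3], ![0,4,3,1], ![0,4,3,2],
    ![0,1,4,3], ![0,2,1,4], ![3,1,0,2], ![3,2,0,4],
    ![0,2,4,1], ![0,4,1,3], ![3,2,0,1], ![3,4,0,2]]

def myf (x : Fin 4 → Bool) (i : Fin 4) : Fin 5 :=
  tbl ⟨(if x 0 then 1 else 0) + (if x 1 then 2 else 0) +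
       (if x 2 then 4 else 0) + (if x 3 then 8 else 0), by
    split <;> split <;> split <;> split <;> omega⟩ i

theorem H4_proper_five_coloring_distinguishing :
    ∃ f : (Fin 4 → Bool) → Fin 4 → Fin 5,
      IsEdgeColoring f ∧ IsProper f ∧ Distinguishes f := by
  refine ⟨myf, ?_, ?_, ?_⟩ <;>
    simp only [IsEdgeColoring, IsProper, Distinguishes, Function.Injective] <;> decide
end

section
/- There exists a proper edge coloring of the 5-dimensional hypercube H_5 with 5 colors such that all 32 vertices have pairwise distinct palettes, and moreover the edges of color 1 occur only in dimensions 3 and 5 and every vertex is incident to an edge of color 1. -/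
def H5tbl : Fin 32 → Fin 5 → Fin 5 := ![
  ![2,1,3,4,0],
  ![2,3,1,4,0],
  ![2,1,0,4,3],
  ![2,3,0,1,4],
  ![2,4,3,1,0],
  ![2,4,1,3,0],
  ![1,4,0,2,3],
  ![1,4,0,3,2],
  ![3,1,2,4,0],
  ![3,2,0,4,1],
  ![3,1,0,4,2],
  ![3,2,4,1,0],
  ![4,3,2,1,0],
  ![4,2,0,3,1],
  ![1,3,0,2,4],
  ![1,2,4,3,0],
  ![4,2,3,1,0],
  ![4,2,1,3,0],
  ![1,2,0,4,3],
  ![1,2,0,3,4],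
  ![4,1,3,2,0],
  ![4,3,1,2,0],
  ![4,1,0,2,3],
  ![4,3,0,1,2],
  ![2,3,4,1,0],
  ![2,4,0,3,1],
  ![1,3,0,4,2],
  ![1,4,2,3,0],
  ![3,1,4,2,0],
  ![3,4,0,2,1],
  ![3,1,0,2,4],
  ![3,4,2,1,0]]

def H5idx (x : Fin 5 → Bool) : Fin 32 :=
  ⟨(x 0).toNat + 2*(x 1).toNat + 4*(x 2).toNat + 8*(x 3).toNat + 16*(x 4).toNat, by
    have h0 := (x 0).toNat_lt; have h1 := (x 1).toNat_lt
    have h2 := (x 2).toNat_lt; have h3 := (x 3).toNat_lt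
    have h4 := (x 4).toNat_lt; omega⟩

def H5f : (Fin 5 → Bool) → Fin 5 → Fin 5 := fun x => H5tbl (H5idx x)

/-- Colors are `Fin 5`, where `0 : Fin 5` plays the role of color 1, and the
dimensions 3 and 5 are the indices `2` and `4` of `Fin 5`. -/
theorem H5_proper_five_coloring_distinguishing :
    ∃ f : (Fin 5 → Bool) → Fin 5 → Fin 5,
      IsEdgeColoring f ∧ IsProper f ∧ Distinguishes f ∧
      (∀ (x : Fin 5 → Bool) (i : Fin 5), f x i = 0 → i = 2 ∨ i = 4) ∧
      (∀ x : Fin 5 → Bool, ∃ i : Fin 5, f x i = 0) := by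
  refine ⟨H5f, ?_, ?_, ?_, ?_, ?_⟩
  · unfold IsEdgeColoring; decide
  · unfold IsProper; decide
  · unfold Distinguishes; decide
  · decide
  · decide
end

section
/- For every n ≥ 5, there exists a proper edge coloring of H_n with exactly n colors such that all 2^n vertices have pairwise distinct palettes; hence n is the minimum number of colors in a proper edge coloring of H_n (n ≥ 5) distinguishing all vertices by palettes. -/
/-! ### Auxiliary construction -/

def tbl5 : Fin 32 → Fin 5 → Fin 5 :=
  ![![0,1,2,3,4],
    ![0,1,2,4,3],
    ![0,1,3,2,4],
    ![0,1,3,4,2],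
    ![3,0,2,4,1],
    ![3,4,2,0,1],
    ![2,0,3,4,1],
    ![2,4,3,1,0],
    ![2,4,1,3,0],
    ![2,3,1,4,0],
    ![0,4,1,2,3],
    ![0,3,2,4,1],
    ![3,2,1,4,0],
    ![3,4,1,0,2],
    ![0,2,1,4,3],
    ![0,4,2,1,3],
    ![0,2,3,1,4],
    ![0,1,4,2,3],
    ![3,2,0,1,4],
    ![3,1,4,0,2],
    ![0,4,3,2,1],
    ![0,2,4,3,1],
    ![3,4,0,2,1],
    ![3,2,4,1,0],
    ![4,2,3,1,0],
    ![4,3,1,2,0],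
    ![4,2,0,1,3],
    ![4,3,2,0,1],
    ![4,1,3,2,0],
    ![4,0,1,3,2],
    ![4,1,0,2,3],
    ![4,0,2,1,3]]

def enc5 (x : Fin 5 → Bool) : Fin 32 :=
  (cond (x 0) 1 0) + 2 * (cond (x 1) 1 0) + 4 * (cond (x 2) 1 0)
    + 8 * (cond (x 3) 1 0) + 16 * (cond (x 4) 1 0)

def f5 : (Fin 5 → Bool) → Fin 5 → Fin 5 := fun x => tbl5 (enc5 x)

/-- The strengthened invariant for the induction. -/
def Good (n : ℕ) : Prop :=
  ∃ f : (Fin n → Bool) → Fin n → Fin n, ∃ δ : Equiv.Perm (Fin n),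
    IsEdgeColoring f ∧ IsProper f ∧ Distinguishes f ∧
    ∀ x y : Fin n → Bool, ∃ i, δ (f y i) ≠ f x i

/-- One-dimension extension of a coloring. -/
def extendF {n : ℕ} (f : (Fin n → Bool) → Fin n → Fin n) (δ : Equiv.Perm (Fin n)) :
    (Fin (n+1) → Bool) → Fin (n+1) → Fin (n+1) := fun x i =>
  Fin.lastCases (Fin.last n)
    (fun j => Fin.castSucc
      (if x (Fin.last n) then δ (f (fun k => x k.castSucc) j)
       else f (fun k => x k.castSucc) j)) i

lemma flip_last_init {n : ℕ} (x : Fin (n+1) → Bool) :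
    (fun k : Fin n => (flipCoord x (Fin.last n)) k.castSucc) = fun k => x k.castSucc := by
  funext k
  exact Function.update_of_ne (Fin.castSucc_lt_last k).ne _ _

lemma flip_castSucc_last {n : ℕ} (x : Fin (n+1) → Bool) (j : Fin n) :
    (flipCoord x j.castSucc) (Fin.last n) = x (Fin.last n) :=
  Function.update_of_ne (Fin.castSucc_lt_last j).ne' _ _

lemma flip_castSucc_init {n : ℕ} (x : Fin (n+1) → Bool) (j : Fin n) :
    (fun k : Fin n => (flipCoord x j.castSucc) k.castSucc)
      = flipCoord (fun k => x k.castSucc) j := by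
  funext k
  simp [flipCoord, Function.update_apply, Fin.castSucc_inj]

lemma good_succ {n : ℕ} (hn : 1 ≤ n) (h : Good n) : Good (n+1) := by
  obtain ⟨f, δ, hE, hP, hD, hδ⟩ := h
  have hlast0 : (Fin.last n : Fin (n+1)) ≠ 0 := by
    simp [Fin.ext_iff]; omega
  refine ⟨extendF f δ, Equiv.swap 0 (Fin.last n), ?_, ?_, ?_, ?_⟩
  · -- edge coloring
    intro x i
    induction i using Fin.lastCases with
    | last =>
      simp [extendF]
    | cast j =>
      simp only [extendF, Fin.lastCases_castSucc, flip_castSucc_last, flip_castSucc_init]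
      rw [← hE]
  · -- proper
    intro x i i' hii
    induction i using Fin.lastCases with
    | last =>
      induction i' using Fin.lastCases with
      | last => rfl
      | cast j' =>
        simp only [extendF, Fin.lastCases_castSucc, Fin.lastCases_last] at hii
        exact absurd hii.symm (Fin.castSucc_lt_last _).ne
    | cast j =>
      induction i' using Fin.lastCases with
      | last =>
        simp only [extendF, Fin.lastCases_castSucc, Fin.lastCases_last] at hii
        exact absurd hii (Fin.castSucc_lt_last _).ne
      | cast j' =>
        simp only [extendF, Fin.lastCases_castSucc] at hii
        have := Fin.castSucc_injective _ hii
        congr 1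
        by_cases hb : x (Fin.last n) = true <;> simp only [hb, if_true, if_false] at this
        · exact hP _ (δ.injective this)
        · exact hP _ this
  · -- distinguishes
    intro x x' hxx
    have hc : ∀ j : Fin n,
        (if x (Fin.last n) then δ (f (fun k => x k.castSucc) j)
          else f (fun k => x k.castSucc) j)
        = (if x' (Fin.last n) then δ (f (fun k => x' k.castSucc) j)
          else f (fun k => x' k.castSucc) j) := by
      intro j
      have := hxx j.castSucc
      simp only [extendF, Fin.lastCases_castSucc] at this
      exact Fin.castSucc_injective _ this
    have key : x (Fin.last n) = x' (Fin.last n) ∧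
        (fun k : Fin n => x k.castSucc) = fun k => x' k.castSucc := by
      cases hb : x (Fin.last n) <;> cases hb' : x' (Fin.last n) <;>
        simp only [hb, hb', if_true, if_false, Bool.false_eq_true] at hc
      · exact ⟨rfl, hD _ _ hc⟩
      · exfalso
        obtain ⟨i, hi⟩ := hδ (fun k => x k.castSucc) (fun k => x' k.castSucc)
        exact hi (hc i).symm
      · exfalso
        obtain ⟨i, hi⟩ := hδ (fun k => x' k.castSucc) (fun k => x k.castSucc)
        exact hi (hc i)
      · exact ⟨rfl, hD _ _ fun j => δ.injective (hc j)⟩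
    funext i
    induction i using Fin.lastCases with
    | last => exact key.1
    | cast j => exact congrFun key.2 j
  · -- the shift permutation
    intro x y
    refine ⟨Fin.last n, ?_⟩
    have h1 : extendF f δ y (Fin.last n) = Fin.last n := by simp [extendF]
    have h2 : extendF f δ x (Fin.last n) = Fin.last n := by simp [extendF]
    rw [h1, h2, Equiv.swap_apply_right]
    exact hlast0.symm

lemma good5 : Good 5 := by
  refine ⟨f5, Equiv.swap 0 1, ?_, ?_, ?_, ?_⟩
  · unfold IsEdgeColoring; decide
  · unfold IsProper; decide
  · unfold Distinguishes; decide
  · decide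

lemma good_all (n : ℕ) (hn : 5 ≤ n) : Good n := by
  induction n, hn using Nat.le_induction with
  | base => exact good5
  | succ m hm ih => exact good_succ (by omega) ih

theorem proper_distinguishing_index_eq_n (n : ℕ) (hn : 5 ≤ n) :
    IsLeast {k : ℕ | ∃ f : (Fin n → Bool) → Fin n → Fin k,
      IsEdgeColoring f ∧ IsProper f ∧ Distinguishes f} n := by
  constructor
  · obtain ⟨f, δ, hE, hP, hD, -⟩ := good_all n hn
    exact ⟨f, hE, hP, hD⟩
  · rintro k ⟨f, -, hP, -⟩
    have := Fintype.card_le_of_injective _ (hP fun _ => false)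
    simpa using this
end

section
/- Suppose f_{n-1} is a proper edge coloring of H_{n-1} with colors {1,...,n-1} distinguishing all vertices by palettes, in which all edges of dimension n-1 receive color n-1 (n ≥ 7). Define a coloring f_n of H_n by: on the subcube of vertices with last coordinate 0 use f_{n-1}; on the subcube with last coordinate 1 use f_{n-1} with colors n-1 and n-2 interchanged; and color all dimension-n edges with the new color n. Then f_n is a proper edge coloring of H_n with n colors distinguishing all vertices by palettes, in which all edges of dimension n receive color n. -/
/-- Interchange colors `a` and `b`. -/
def swapTwo (a b c : ℕ) : ℕ := if c = a then b else if c = b then a else c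

/-- The coloring `f_n` of `H_{m+1}` obtained from a coloring `f` of `H_m`:
on the subcube with last coordinate `false` use `f`, on the subcube with last
coordinate `true` use `f` with colors `m` and `m-1` interchanged, and color
all dimension-`(m+1)` edges with the new color `m+1`. -/
def extendColoring (m : ℕ) (f : (Fin m → Bool) → Fin m → ℕ) :
    (Fin (m + 1) → Bool) → Fin (m + 1) → ℕ :=
  fun x i =>
    if h : (i : ℕ) < m then
      if x (Fin.last m) = false then f (Fin.init x) ⟨i, h⟩
      else swapTwo m (m - 1) (f (Fin.init x) ⟨i, h⟩)
    else m + 1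

lemma swapTwo_invol (a b c : ℕ) : swapTwo a b (swapTwo a b c) = c := by
  unfold swapTwo; split_ifs <;> omega

lemma flip_last {m : ℕ} (x : Fin (m+1) → Bool) (i : Fin (m+1)) (h : (i:ℕ) < m) :
    flipCoord x i (Fin.last m) = x (Fin.last m) := by
  apply Function.update_of_ne
  simp [Fin.ext_iff]; omega

lemma init_flip {m : ℕ} (x : Fin (m+1) → Bool) (i : Fin (m+1)) (h : (i:ℕ) < m) :
    Fin.init (flipCoord x i) = flipCoord (Fin.init x) ⟨i, h⟩ := by
  funext j
  simp only [Fin.init, flipCoord]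
  rw [Function.update_apply, Function.update_apply]
  have hc : Fin.castSucc (⟨(i:ℕ), h⟩ : Fin m) = i := by simp [Fin.ext_iff]
  by_cases hj : j = ⟨(i:ℕ), h⟩
  · subst hj; simp [hc]
  · rw [if_neg (by simpa [Fin.ext_iff] using fun hh => hj (Fin.ext hh)), if_neg hj]; rfl

lemma init_flip_last {m : ℕ} (x : Fin (m+1) → Bool) :
    Fin.init (flipCoord x (Fin.last m)) = Fin.init x := by
  funext j
  simp only [Fin.init, flipCoord]
  apply Function.update_of_ne
  simp [Fin.ext_iff]; omega

/-- Here `n = m + 1 ≥ 7`; `H_{n-1} = H_m` has colors `{1, …, m}` and all its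
edges of dimension `m` (index `m - 1`) have color `m`. -/
theorem inductive_step_proper (m : ℕ) (hm : 7 ≤ m + 1)
    (f : (Fin m → Bool) → Fin m → ℕ)
    (hrange : ∀ x i, f x i ∈ Finset.Icc 1 m)
    (he : IsEdgeColoring f) (hp : IsProper f) (hd : Distinguishes f)
    (hlast : ∀ x, f x ⟨m - 1, by omega⟩ = m) :
    IsEdgeColoring (extendColoring m f) ∧
    IsProper (extendColoring m f) ∧
    Distinguishes (extendColoring m f) ∧
    (∀ x i, extendColoring m f x i ∈ Finset.Icc 1 (m + 1)) ∧
    (∀ x, extendColoring m f x (Fin.last m) = m + 1) := by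
  have hm6 : 6 ≤ m := by omega
  have hswap_mem : ∀ c, c ∈ Finset.Icc 1 m → swapTwo m (m-1) c ∈ Finset.Icc 1 m := by
    intro c hc
    simp only [Finset.mem_Icc] at *
    unfold swapTwo; split_ifs <;> omega
  have hrange' : ∀ x i, extendColoring m f x i ∈ Finset.Icc 1 (m + 1) := by
    intro x i
    unfold extendColoring
    by_cases h : (i : ℕ) < m
    · rw [dif_pos h]
      have h1 := hrange (Fin.init x) ⟨i, h⟩
      have h2 := hswap_mem _ h1
      simp only [Finset.mem_Icc] at *
      split_ifs <;> omega
    · rw [dif_neg h]; simp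
  have hbound : ∀ x (i : Fin (m+1)), (i : ℕ) < m → extendColoring m f x i ≤ m := by
    intro x i h
    unfold extendColoring
    rw [dif_pos h]
    have h1 := hrange (Fin.init x) ⟨i, h⟩
    have h2 := hswap_mem _ h1
    simp only [Finset.mem_Icc] at *
    split_ifs <;> omega
  have hlastcol : ∀ x, extendColoring m f x (Fin.last m) = m + 1 := by
    intro x
    unfold extendColoring
    rw [dif_neg (by simp)]
  refine ⟨?_, ?_, ?_, hrange', hlastcol⟩
  · -- IsEdgeColoring
    intro x i
    by_cases h : (i : ℕ) < m
    · unfold extendColoring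
      rw [dif_pos h, dif_pos h, flip_last x i h, init_flip x i h, ← he]
    · have hi : i = Fin.last m := by
        apply Fin.ext; have := i.isLt; simp [Fin.last]; omega
      subst hi
      unfold extendColoring
      rw [dif_neg (by simp), dif_neg (by simp)]
  · -- IsProper
    intro x i j hij
    by_cases h1 : (i : ℕ) < m <;> by_cases h2 : (j : ℕ) < m
    · unfold extendColoring at hij
      rw [dif_pos h1, dif_pos h2] at hij
      have key : f (Fin.init x) ⟨i, h1⟩ = f (Fin.init x) ⟨j, h2⟩ := by
        split_ifs at hij with hb
        · exact hij
        · have := congrArg (swapTwo m (m-1)) hij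
          rwa [swapTwo_invol, swapTwo_invol] at this
      have := hp (Fin.init x) key
      simp only [Fin.mk.injEq] at this
      exact Fin.ext this
    · exfalso
      have hj : j = Fin.last m := by
        apply Fin.ext; have := j.isLt; simp [Fin.last]; omega
      subst hj
      rw [hlastcol] at hij
      have := hbound x i h1
      omega
    · exfalso
      have hi : i = Fin.last m := by
        apply Fin.ext; have := i.isLt; simp [Fin.last]; omega
      subst hi
      rw [hlastcol] at hij
      have := hbound x j h2
      omega
    · have hi : i = Fin.last m := by
        apply Fin.ext; have := i.isLt; simp [Fin.last]; omega
      have hj : j = Fin.last m := by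
        apply Fin.ext; have := j.isLt; simp [Fin.last]; omega
      rw [hi, hj]
  · -- Distinguishes
    intro x y hxy
    have hcomp : ∀ i : Fin m,
        extendColoring m f x i.castSucc = extendColoring m f y i.castSucc := fun i => hxy _
    have hcs : ∀ i : Fin m, ((i.castSucc : Fin (m+1)) : ℕ) < m := fun i => i.isLt
    have hval : ∀ (z : Fin (m+1) → Bool) (i : Fin m),
        extendColoring m f z i.castSucc =
          if z (Fin.last m) = false then f (Fin.init z) i
          else swapTwo m (m-1) (f (Fin.init z) i) := by
      intro z i
      unfold extendColoring
      rw [dif_pos (hcs i)]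
      rfl
    have hsnoc : ∀ z : Fin (m+1) → Bool, z = Fin.snoc (Fin.init z) (z (Fin.last m)) := by
      intro z; rw [Fin.snoc_init_self]
    have hinit : Fin.init x = Fin.init y := by
      apply hd
      intro i
      have h := hcomp i
      rw [hval, hval] at h
      by_cases hx : x (Fin.last m) = false <;> by_cases hy : y (Fin.last m) = false
      · rw [if_pos hx, if_pos hy] at h; exact h
      · exfalso
        have h' := hcomp ⟨m - 1, by omega⟩
        rw [hval, hval, if_pos hx, if_neg hy, hlast, hlast] at h'
        unfold swapTwo at h'
        split_ifs at h' <;> omega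
      · exfalso
        have h' := hcomp ⟨m - 1, by omega⟩
        rw [hval, hval, if_neg hx, if_pos hy, hlast, hlast] at h'
        unfold swapTwo at h'
        split_ifs at h' <;> omega
      · rw [if_neg hx, if_neg hy] at h
        have := congrArg (swapTwo m (m-1)) h
        rwa [swapTwo_invol, swapTwo_invol] at this
    have hlasteq : x (Fin.last m) = y (Fin.last m) := by
      by_contra hne
      by_cases hx : x (Fin.last m) = false <;> by_cases hy : y (Fin.last m) = false
      · exact hne (hx.trans hy.symm)
      · have h' := hcomp ⟨m - 1, by omega⟩
        rw [hval, hval, if_pos hx, if_neg hy, hlast, hlast] at h'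
        unfold swapTwo at h'
        split_ifs at h' <;> omega
      · have h' := hcomp ⟨m - 1, by omega⟩
        rw [hval, hval, if_neg hx, if_pos hy, hlast, hlast] at h'
        unfold swapTwo at h'
        split_ifs at h' <;> omega
      · simp only [Bool.not_eq_false] at hx hy
        exact hne (hx.trans hy.symm)
    rw [hsnoc x, hsnoc y, hinit, hlasteq]
end

section
/- Let f be an edge coloring of H_{n-1} (n ≥ 3) with colors {0,1} distinguishing all vertices by palettes. Construct a coloring f' of H_n as follows: on the subcube of vertices with last coordinate 0, use f; on the subcube with last coordinate 1, use f with colors 0 and 1 swapped; and color the dimension-n edges so that for each pair of dimension-n edges whose palettes (restricted to the first n-1 coordinates) in the 0-subcube are bitwise complementary, one edge gets 0 and the other gets 1. Then f' distinguishes all vertices of H_n by palettes. -/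
/-- The coloring `f'` of `H_{m+1}` from a two-coloring `f` of `H_m`: on the
`false`-subcube use `f`, on the `true`-subcube use `f` with the two colors
swapped, and color the dimension-`(m+1)` edge at each vertex by `g` applied to
the corresponding vertex of the `false`-subcube. -/
def extendGeneral (m : ℕ) (f : (Fin m → Bool) → Fin m → Bool)
    (g : (Fin m → Bool) → Bool) :
    (Fin (m + 1) → Bool) → Fin (m + 1) → Bool :=
  fun x i =>
    if h : (i : ℕ) < m then
      if x (Fin.last m) = false then f (Fin.init x) ⟨i, h⟩
      else !(f (Fin.init x) ⟨i, h⟩)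
    else g (Fin.init x)

/-- Here `n = m + 1 ≥ 3`, the colors `{0,1}` are `Bool`, and `g` assigns the
colors of the dimension-`n` matching edges so that whenever two vertices of the
`0`-subcube have bitwise complementary palettes, their matching edges get
complementary colors. -/
theorem inductive_step_general (m : ℕ) (hm : 3 ≤ m + 1)
    (f : (Fin m → Bool) → Fin m → Bool)
    (he : IsEdgeColoring f) (hd : Distinguishes f)
    (g : (Fin m → Bool) → Bool)
    (hg : ∀ u v : Fin m → Bool, (∀ i, f v i = !(f u i)) → g v = !(g u)) :
    Distinguishes (extendGeneral m f g) := by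
  intro x y h
  have hlast : g (Fin.init x) = g (Fin.init y) := by
    simpa [extendGeneral] using h (Fin.last m)
  have key : ∀ i : Fin m,
      (if x (Fin.last m) = false then f (Fin.init x) i else !(f (Fin.init x) i)) =
      (if y (Fin.last m) = false then f (Fin.init y) i else !(f (Fin.init y) i)) := by
    intro i
    have := h (Fin.castSucc i)
    simpa [extendGeneral, i.isLt] using this
  -- eliminate the mixed case
  have hsame : x (Fin.last m) = y (Fin.last m) := by
    by_contra hne
    cases hx : x (Fin.last m) <;> cases hy : y (Fin.last m) <;>
      simp [hx, hy] at hne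
    · -- x false, y true
      have : g (Fin.init y) = !(g (Fin.init x)) := by
        apply hg
        intro i
        have := key i
        cases hfx : f (Fin.init x) i <;> cases hfy : f (Fin.init y) i <;>
          simp_all [hx, hy]
      rw [hlast] at this
      simp at this
    · have : g (Fin.init x) = !(g (Fin.init y)) := by
        apply hg
        intro i
        have := key i
        cases hfx : f (Fin.init x) i <;> cases hfy : f (Fin.init y) i <;>
          simp_all [hx, hy]
      rw [hlast] at this
      simp at this
  have hinit : Fin.init x = Fin.init y := by
    apply hd
    intro i
    have := key i
    rw [hsame] at this
    cases hy : y (Fin.last m) <;> simp [hy] at this <;> exact this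
  funext j
  rcases Fin.eq_castSucc_or_eq_last j with ⟨k, rfl⟩ | rfl
  · have := congrFun hinit k
    simpa [Fin.init] using this
  · exact hsame
end

section
/- In any proper edge coloring of H_4 with 4 colors distinguishing all vertices by palettes, for each dimension i and each color c, exactly two edges of dimension i have color c. -/
/-! Count the dimension-`i` edges of color `c` by their endpoints in the half-cube `x i = false`;
call this number `a`. Every vertex lies on exactly one `c`-edge, and the `c`-edges of the other
dimensions pair off vertices inside the half-cube, which has 8 vertices; so `a` is even. Both
endpoints of each of these `a` edges have an injective palette with value `c` at `i`; there are
only `3! = 6` such palettes and the coloring distinguishes vertices, so `2a ≤ 6`. Hence `a ≤ 2`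
for every color, and the four values of `a` add up to the 8 edges of dimension `i`. -/

open Finset

section Hypercube

variable {n : ℕ}

lemma flipCoord_apply_of_ne (x : Fin n → Bool) {i j : Fin n} (h : j ≠ i) :
    flipCoord x i j = x j :=
  Function.update_of_ne h _ _

@[simp]
lemma flipCoord_apply_self (x : Fin n → Bool) (i : Fin n) : flipCoord x i i = !x i := by
  simp [flipCoord]

@[simp]
lemma flipCoord_flipCoord (x : Fin n → Bool) (i : Fin n) : flipCoord (flipCoord x i) i = x := by
  simp [flipCoord]

lemma two_mul_card_filter_apply_eq_false_and (i : Fin n) (p : (Fin n → Bool) → Prop)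
    [DecidablePred p] (hp : ∀ x, p (flipCoord x i) ↔ p x) :
    2 * #{x | x i = false ∧ p x} = #{x | p x} := by
  have halves : #{x | x i = false ∧ p x} + #{x | ¬x i = false ∧ p x} = #{x | p x} := by
    simpa only [filter_filter, and_comm] using
      card_filter_add_card_filter_not (s := ({x | p x} : Finset _)) (fun x => x i = false)
  have hflip : #{x | ¬x i = false ∧ p x} = #{x | x i = false ∧ p x} := by
    refine card_nbij' (flipCoord · i) (flipCoord · i) ?_ ?_ ?_ ?_ <;>
      simp [Set.MapsTo, Set.LeftInvOn, Set.RightInvOn, hp]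
  omega

lemma card_filter_apply_eq_false (i : Fin n) :
    #{x : Fin n → Bool | x i = false} = 2 ^ (n - 1) := by
  have h := two_mul_card_filter_apply_eq_false_and i (fun _ => True) (by simp)
  obtain ⟨m, rfl⟩ : ∃ m, n = m + 1 := Nat.exists_eq_add_one.mpr i.pos
  simp only [and_true, filter_true, card_univ, Fintype.card_fun, Fintype.card_bool,
    Fintype.card_fin, pow_succ'] at h
  simpa using h

end Hypercube

lemma sum_card_filter_eq_card_of_existsUnique {α β : Type*} [Fintype β] (s : Finset α)
    (p : β → α → Prop) [∀ b, DecidablePred (p b)] (h : ∀ a ∈ s, ∃! b, p b a) :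
    ∑ b, #{a ∈ s | p b a} = #s := by
  have hone : ∀ a ∈ s, #(univ.bipartiteAbove (fun a b => p b a) a) = 1 := fun a ha =>
    (Fintype.existsUnique_iff_card_one _).mp (h a ha)
  change ∑ b, #(s.bipartiteBelow (fun a b => p b a) b) = #s
  rw [← sum_card_bipartiteAbove_eq_sum_card_bipartiteBelow, sum_congr rfl hone, card_eq_sum_ones]

section Coloring

variable {n : ℕ} {C : Type*} [DecidableEq C] {f : (Fin n → Bool) → Fin n → C}

theorem IsEdgeColoring.even_card_filter_apply_eq_false_and (he : IsEdgeColoring f) {c : C}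
    (hc : ∀ x, ∃! j, f x j = c) (hn : 2 ≤ n) (i : Fin n) :
    Even #{x | x i = false ∧ f x i = c} := by
  have hsum : ∑ j, #{x | x i = false ∧ f x j = c} = 2 ^ (n - 1) := by
    rw [← card_filter_apply_eq_false i]
    simpa only [filter_filter] using
      sum_card_filter_eq_card_of_existsUnique {x : Fin n → Bool | x i = false}
        (fun j x => f x j = c) (fun x _ => hc x)
  have hother : ∀ j ∈ univ.erase i, Even #{x | x i = false ∧ f x j = c} := by
    intro j hj
    rw [← two_mul_card_filter_apply_eq_false_and j _ fun x => by
      rw [flipCoord_apply_of_ne x (ne_of_mem_erase hj).symm, ← he]]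
    exact even_two_mul _
  rw [← add_sum_erase _ _ (mem_univ i)] at hsum
  have htotal : Even (2 ^ (n - 1)) := (Nat.even_pow' (by omega)).mpr even_two
  rw [← hsum, Nat.even_add] at htotal
  exact htotal.mpr (even_sum _ hother)

lemma Distinguishes.card_filter_apply_eq_le_card_injective [Fintype C] (hp : IsProper f)
    (hd : Distinguishes f) (i : Fin n) (c : C) :
    #{x | f x i = c} ≤ #{g : Fin n → C | Function.Injective g ∧ g i = c} :=
  card_le_card_of_injOn f (fun x hx => by simp_all [hp x])
    fun x _ y _ hxy => hd x y (congrFun hxy)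

end Coloring

lemma card_filter_injective_apply_eq_fin_four (i c : Fin 4) :
    #{g : Fin 4 → Fin 4 | Function.Injective g ∧ g i = c} = 6 := by
  revert i c
  decide

/-- Dimension-`i` edges are in bijection with vertices `x` having `x i = false`. -/
theorem H4_exactly_two_edges_per_dim_per_color
    (f : (Fin 4 → Bool) → Fin 4 → Fin 4)
    (he : IsEdgeColoring f) (hp : IsProper f) (hd : Distinguishes f) :
    ∀ (i : Fin 4) (c : Fin 4),
      (Finset.univ.filter
        (fun x : Fin 4 → Bool => x i = false ∧ f x i = c)).card = 2 := by
  intro i c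
  have hle : ∀ d, #{x | x i = false ∧ f x i = d} ≤ 2 := fun d => by
    have hcard := (two_mul_card_filter_apply_eq_false_and i (f · i = d) fun x => by
      rw [← he]).trans_le (hd.card_filter_apply_eq_le_card_injective hp i d)
    rw [card_filter_injective_apply_eq_fin_four] at hcard
    obtain ⟨k, hk⟩ := he.even_card_filter_apply_eq_false_and
      (fun x => (Finite.injective_iff_bijective.mp (hp x)).existsUnique d) le_add_self i
    omega
  have hsum : ∑ d, #{x | x i = false ∧ f x i = d} = 8 := by
    simpa [filter_filter, card_filter_apply_eq_false] using
      sum_card_filter_eq_card_of_existsUnique {x : Fin 4 → Bool | x i = false}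
        (fun d x => f x i = d) (fun x _ => existsUnique_eq')
  exact (sum_eq_sum_iff_of_le fun d _ => hle d).mp (hsum.trans (by simp)) c (mem_univ c)
end

section
/- For n ≥ 6, if H_n admits a proper n-edge-coloring distinguishing all vertices by palettes in which all dimension-(n) edges share one color, then H_{n+1} admits a proper (n+1)-edge-coloring distinguishing all vertices by palettes in which all dimension-(n+1) edges share one (new) color. -/
lemma flip_restrict {n : ℕ} (x : Fin (n+1) → Bool) (i : Fin (n+1)) (hi : (i : ℕ) < n) :
    (fun j : Fin n => flipCoord x i j.castSucc) = flipCoord (fun j => x j.castSucc) ⟨i, hi⟩ := by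
  funext j
  simp only [flipCoord, Function.update]
  by_cases hj : j = ⟨(i : ℕ), hi⟩
  · subst hj
    have h1 : (⟨(i : ℕ), hi⟩ : Fin n).castSucc = i := by ext; simp
    simp [h1]
  · have h2 : (j.castSucc : Fin (n+1)) ≠ i := by
      intro hc
      apply hj
      ext
      simpa [Fin.ext_iff] using hc
    simp [hj, h2]

/-- If `H_n` (`n ≥ 6`) has a proper `n`-edge-coloring with colors `{1, …, n}`
distinguishing all vertices, in which all dimension-`n` edges share the color
`n`, then `H_{n+1}` has a proper `(n+1)`-edge-coloring distinguishing all
vertices in which all dimension-`(n+1)` edges share the new color `n+1`. -/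
theorem inductive_step_exists (n : ℕ) (hn : 6 ≤ n)
    (h : ∃ f : (Fin n → Bool) → Fin n → ℕ,
      (∀ x i, f x i ∈ Finset.Icc 1 n) ∧
      IsEdgeColoring f ∧ IsProper f ∧ Distinguishes f ∧
      (∀ x, f x ⟨n - 1, by omega⟩ = n)) :
    ∃ g : (Fin (n + 1) → Bool) → Fin (n + 1) → ℕ,
      (∀ x i, g x i ∈ Finset.Icc 1 (n + 1)) ∧
      IsEdgeColoring g ∧ IsProper g ∧ Distinguishes g ∧
      (∀ x, g x (Fin.last n) = n + 1) := by
  obtain ⟨f, hmem, hec, hprop, hdist, hlastc⟩ := h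
  have hmem' : ∀ x i, 1 ≤ f x i ∧ f x i ≤ n := by
    intro x i; have := hmem x i; simpa [Finset.mem_Icc] using this
  set σ : ℕ → ℕ := fun c => if c = n then n - 1 else if c = n - 1 then n else c with hσdef
  have hσinv : ∀ c, σ (σ c) = c := by
    intro c; simp only [hσdef]; split_ifs <;> omega
  have hσinj : Function.Injective σ := by
    intro a b hab
    have := congrArg σ hab; rwa [hσinv, hσinv] at this
  have hσmem : ∀ c, 1 ≤ c → c ≤ n → 1 ≤ σ c ∧ σ c ≤ n := by
    intro c h1 h2; simp only [hσdef]; split_ifs <;> omega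
  set τ : Bool → ℕ → ℕ := fun b => if b then σ else id with hτdef
  have hτinj : ∀ b, Function.Injective (τ b) := by
    intro b; cases b <;> simp [hτdef, hσinj, Function.injective_id]
  have hτmem : ∀ b c, 1 ≤ c → c ≤ n → 1 ≤ τ b c ∧ τ b c ≤ n := by
    intro b c h1 h2; cases b <;> simp [hτdef] <;> [omega; exact hσmem c h1 h2]
  set g : (Fin (n+1) → Bool) → Fin (n+1) → ℕ := fun x i =>
    if hi : (i : ℕ) < n then
      τ (x (Fin.last n)) (f (fun j => x j.castSucc) ⟨i, hi⟩)
    else n + 1 with hgdef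
  have hglast : ∀ x, g x (Fin.last n) = n + 1 := by
    intro x; simp [hgdef]
  have hne : ∀ (x : Fin (n+1) → Bool) (i : Fin (n+1)) (hi : (i : ℕ) < n),
      i ≠ Fin.last n := by
    intro x i hi hc; rw [hc] at hi; simp at hi
  refine ⟨g, ?_, ?_, ?_, ?_, hglast⟩
  · -- membership
    intro x i
    by_cases hi : (i : ℕ) < n
    · have := hmem' (fun j => x j.castSucc) ⟨i, hi⟩
      have := hτmem (x (Fin.last n)) _ this.1 this.2
      simp only [hgdef, dif_pos hi]
      simp only [Finset.mem_Icc]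
      omega
    · simp [hgdef, hi, Finset.mem_Icc]
  · -- edge coloring
    intro x i
    by_cases hi : (i : ℕ) < n
    · have hlastne : (Fin.last n : Fin (n+1)) ≠ i := (hne x i hi ·.symm)
      have hflast : flipCoord x i (Fin.last n) = x (Fin.last n) := by
        simp [flipCoord, Function.update, hlastne]
      simp only [hgdef, dif_pos hi, hflast, flip_restrict x i hi]
      rw [← hec]
    · simp [hgdef, hi]
  · -- proper
    intro x i j hij
    by_cases hi : (i : ℕ) < n <;> by_cases hj : (j : ℕ) < n
    · simp only [hgdef, dif_pos hi, dif_pos hj] at hij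
      have h2 := congrArg Fin.val (hprop _ (hτinj (x (Fin.last n)) hij))
      exact Fin.ext h2
    · exfalso
      simp only [hgdef, dif_pos hi, dif_neg hj] at hij
      have := hmem' (fun j => x j.castSucc) ⟨i, hi⟩
      have := hτmem (x (Fin.last n)) _ this.1 this.2
      omega
    · exfalso
      simp only [hgdef, dif_neg hi, dif_pos hj] at hij
      have := hmem' (fun k => x k.castSucc) ⟨j, hj⟩
      have := hτmem (x (Fin.last n)) _ this.1 this.2
      omega
    · ext
      omega
  · -- distinguishes
    intro x y hxy
    have hNlt : n - 1 < n := by omega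
    -- last coordinates agree
    have hN : g x ⟨n - 1, by omega⟩ = g y ⟨n - 1, by omega⟩ := hxy _
    have hNx : ∀ z : Fin (n+1) → Bool,
        g z ⟨n - 1, by omega⟩ = if z (Fin.last n) then n - 1 else n := by
      intro z
      have : ((⟨n - 1, by omega⟩ : Fin (n+1)) : ℕ) < n := hNlt
      simp only [hgdef, dif_pos this]
      have : f (fun j => z j.castSucc) ⟨n - 1, hNlt⟩ = n := hlastc _
      rw [this]
      cases hz : z (Fin.last n) <;> simp [hτdef, hσdef]
    have hlasteq : x (Fin.last n) = y (Fin.last n) := by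
      rw [hNx x, hNx y] at hN
      cases hx : x (Fin.last n) <;> cases hy : y (Fin.last n) <;>
        simp [hx, hy] at hN ⊢ <;> omega
    have hrest : (fun j : Fin n => x j.castSucc) = (fun j : Fin n => y j.castSucc) := by
      apply hdist
      intro i
      have hi : ((i.castSucc : Fin (n+1)) : ℕ) < n := i.isLt
      have := hxy i.castSucc
      simp only [hgdef, dif_pos hi, hlasteq] at this
      have := hτinj (y (Fin.last n)) this
      simpa using this
    funext j
    rcases Fin.lastCases (motive := fun j => x j = y j) hlasteq
      (fun k => by simpa using congrFun hrest k) j with h'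
    exact h'
end
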